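/- arXiv:1907.00574 — 2 statements merged into one kernel-verified Lean document; each statement's English description precedes it below -/
import Mathlib

section
/- The weighted translation operators W_a on 𝓕²(ℂⁿ), defined by W_aF(z) = F(z-a) e^{z·a - a²/2} for a ∈ ℝⁿ, commute with every operator S_φ: W_a S_φ F = S_φ W_a F for all F ∈ 𝓕²(ℂⁿ) for which both sides are defined by absolutely convergent integrals. -/
open MeasureTheory Complex

/-- The integral operator `S_φ F(z) = ∫ F(w) e^{z·w̄} φ(z - w̄) dλ(w)` on the Fock space. -/
noncomputable def Sop (n : ℕ) (φ F : (Fin n → ℂ) → ℂ) (z : Fin n → ℂ) : ℂ :=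
  ∫ w : Fin n → ℂ,
    F w * Complex.exp (∑ j, z j * (starRingEnd ℂ) (w j))
      * φ (fun j => z j - (starRingEnd ℂ) (w j))
      * (((Real.pi ^ n)⁻¹ * Real.exp (-(∑ j, Complex.normSq (w j))) : ℝ) : ℂ)

/-- The weighted translation `W_a F(z) = F(z-a) e^{z·a - a²/2}` for `a ∈ ℝⁿ`. -/
noncomputable def Wop (n : ℕ) (a : Fin n → ℝ) (F : (Fin n → ℂ) → ℂ) (z : Fin n → ℂ) : ℂ :=
  F (fun j => z j - (a j : ℂ)) * Complex.exp (∑ j, z j * (a j : ℂ) - (∑ j, (a j : ℂ) ^ 2) / 2)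

/-- the weighted translations `W_a` commute with every operator `S_φ`,
whenever all the integrals involved converge absolutely. -/
theorem weighted_translation_commutes (n : ℕ) (a : Fin n → ℝ)
    (φ F : (Fin n → ℂ) → ℂ)
    (h1 : ∀ z : Fin n → ℂ, Integrable (fun w : Fin n → ℂ =>
      F w * Complex.exp (∑ j, z j * (starRingEnd ℂ) (w j))
        * φ (fun j => z j - (starRingEnd ℂ) (w j))
        * (((Real.pi ^ n)⁻¹ * Real.exp (-(∑ j, Complex.normSq (w j))) : ℝ) : ℂ)))
    (h2 : ∀ z : Fin n → ℂ, Integrable (fun w : Fin n → ℂ =>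
      Wop n a F w * Complex.exp (∑ j, z j * (starRingEnd ℂ) (w j))
        * φ (fun j => z j - (starRingEnd ℂ) (w j))
        * (((Real.pi ^ n)⁻¹ * Real.exp (-(∑ j, Complex.normSq (w j))) : ℝ) : ℂ))) :
    ∀ z : Fin n → ℂ, Wop n a (Sop n φ F) z = Sop n φ (Wop n a F) z := by
  intro z
  simp only [Wop, Sop]
  rw [← MeasureTheory.integral_add_right_eq_self
    (fun w : Fin n → ℂ =>
      (F (fun j => w j - (a j : ℂ)) *
          Complex.exp (∑ j, w j * (a j : ℂ) - (∑ j, (a j : ℂ) ^ 2) / 2)) *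
        Complex.exp (∑ j, z j * (starRingEnd ℂ) (w j)) *
        φ (fun j => z j - (starRingEnd ℂ) (w j)) *
        (((Real.pi ^ n)⁻¹ * Real.exp (-(∑ j, Complex.normSq (w j))) : ℝ) : ℂ))
    (fun j => (a j : ℂ))]
  rw [← MeasureTheory.integral_mul_const]
  congr 1
  funext v
  simp only [Pi.add_apply]
  have hF : (fun j => v j + (a j : ℂ) - (a j : ℂ)) = v := by funext j; ring
  have hφ : (fun j => z j - (starRingEnd ℂ) (v j + (a j : ℂ)))
      = (fun j => z j - (a j : ℂ) - (starRingEnd ℂ) (v j)) := by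
    funext j; simp [map_add, Complex.conj_ofReal]; ring
  rw [hF, hφ]
  push_cast [Complex.ofReal_exp]
  have hE : (∑ x, (z x - (a x : ℂ)) * (starRingEnd ℂ) (v x))
        + (-∑ i, (Complex.normSq (v i) : ℂ))
        + (∑ j, z j * (a j : ℂ) - (∑ j, (a j : ℂ) ^ 2) / 2)
      = (∑ x, (v x + (a x : ℂ)) * (a x : ℂ) - (∑ j, (a j : ℂ) ^ 2) / 2)
        + (∑ x, z x * (starRingEnd ℂ) (v x + (a x : ℂ)))
        + (-∑ i, (Complex.normSq (v i + (a i : ℂ)) : ℂ)) := by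
    have h : ∑ j, ((z j - (a j : ℂ)) * (starRingEnd ℂ) (v j)
          - (Complex.normSq (v j) : ℂ) + z j * (a j : ℂ))
        = ∑ j, ((v j + (a j : ℂ)) * (a j : ℂ)
          + z j * (starRingEnd ℂ) (v j + (a j : ℂ))
          - (Complex.normSq (v j + (a j : ℂ)) : ℂ)) :=
      Finset.sum_congr rfl fun j _ => by
        simp only [← Complex.mul_conj, map_add, Complex.conj_ofReal]; ring
    simp only [Finset.sum_add_distrib, Finset.sum_sub_distrib] at h
    linear_combination h
  have hexp := congrArg Complex.exp hE
  rw [Complex.exp_add, Complex.exp_add, Complex.exp_add, Complex.exp_add] at hexp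
  linear_combination (F v * (φ fun j => z j - (a j : ℂ) - (starRingEnd ℂ) (v j))
    * (((Real.pi : ℂ) ^ n)⁻¹)) * hexp
end

section
/- In dimension n = 1, the symbol of the Hilbert transform under the Bargmann correspondence satisfies the ODE φ'(z) = (2/π)^{1/2} e^{z²/2} with φ(0) = 0, where φ(z) = (2/π)^{1/2} ∫_ℝ (-i·sgn(x)) e^{-2(x - (i/2)z)²} dx; consequently φ(z) = (2/√π) A(z/√2), where A(z) = ∫₀^z e^{u²} du. -/
/-!
Write `s = i z / 2`. Differentiating under the integral sign, the `z`-derivative of the integrand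
is `sgn x · 2 (x - s) e^{-2(x-s)²} = -½ sgn x · ∂ₓ e^{-2(x-s)²}`. On each half-line the integral
of `∂ₓ e^{-2(x-s)²}` is a boundary term at `0`, so `φ'(z) = √(2/π) e^{-2s²} = √(2/π) e^{z²/2}`.
At `z = 0` the integrand is odd, so `φ(0) = 0`. Since `A' = e^{u²}`, the function
`(2/√π) A(z/√2)` has the same derivative as `φ` and also vanishes at `0`, hence equals `φ`.
-/

open MeasureTheory Complex Filter Set Metric Topology
open scoped Interval Real

theorem Real.abs_sign_le_one (x : ℝ) : |Real.sign x| ≤ 1 := by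
  rcases Real.sign_apply_eq x with h | h | h <;> simp [h]

@[fun_prop]
theorem Real.measurable_sign : Measurable Real.sign :=
  Measurable.ite measurableSet_Iio measurable_const
    (Measurable.ite measurableSet_Ioi measurable_const measurable_const)

theorem eq_of_hasDerivAt_eq {𝕜 G : Type*} [NontriviallyNormedField 𝕜] [IsRCLikeNormedField 𝕜]
    [NormedAddCommGroup G] [NormedSpace 𝕜 G] {f g f' : 𝕜 → G}
    (hf : ∀ x, HasDerivAt f (f' x) x) (hg : ∀ x, HasDerivAt g (f' x) x) (x₀ : 𝕜)
    (h : f x₀ = g x₀) : f = g :=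
  eq_of_fderiv_eq (fun x => (hf x).differentiableAt) (fun x => (hg x).differentiableAt)
    (fun x => (hf x).hasFDerivAt.fderiv.trans (hg x).hasFDerivAt.fderiv.symm) x₀ h

section RealLine

variable {E : Type*} [NormedAddCommGroup E] [NormedSpace ℝ E]

theorem integral_eq_zero_of_odd {f : ℝ → E} (hf : Function.Odd f) : ∫ x, f x = 0 := by
  have h : ∫ x, f x = -∫ x, f x :=
    calc ∫ x, f x = ∫ x, f (-x) := (integral_neg_eq_self f volume).symm
      _ = ∫ x, -f x := congrArg _ (funext hf)
      _ = -∫ x, f x := integral_neg _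
  linear_combination (norm := module) (1 / 2 : ℝ) • h

theorem integral_sign_smul_of_hasDerivAt [CompleteSpace E] {f f' : ℝ → E}
    (hderiv : ∀ x, HasDerivAt f (f' x) x) (hf : Integrable f) (hf' : Integrable f') :
    ∫ x, Real.sign x • f' x = (-2 : ℝ) • f 0 := by
  have htop : Tendsto f atTop (𝓝 0) :=
    tendsto_zero_of_hasDerivAt_of_integrableOn_Ioi (a := 0) (fun x _ => hderiv x)
      hf'.integrableOn hf.integrableOn
  have hbot : Tendsto f atBot (𝓝 0) :=
    tendsto_zero_of_hasDerivAt_of_integrableOn_Iic (a := 0) (fun x _ => hderiv x)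
      hf'.integrableOn hf.integrableOn
  have hright : ∫ x in Ioi 0, Real.sign x • f' x = -f 0 := by
    rw [setIntegral_congr_fun measurableSet_Ioi fun x (hx : 0 < x) => by
        rw [Real.sign_of_pos hx, one_smul],
      integral_Ioi_of_hasDerivAt_of_tendsto' (fun x _ => hderiv x) hf'.integrableOn htop, zero_sub]
  have hleft : ∫ x in Iic 0, Real.sign x • f' x = -f 0 := by
    rw [integral_Iic_eq_integral_Iio,
      setIntegral_congr_fun measurableSet_Iio fun x (hx : x < 0) => by
        rw [Real.sign_of_neg hx, neg_one_smul], integral_neg, ← integral_Iic_eq_integral_Iio,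
      integral_Iic_of_hasDerivAt_of_tendsto' (fun x _ => hderiv x) hf'.integrableOn hbot, sub_zero]
  have hint : Integrable fun x => Real.sign x • f' x :=
    hf'.bdd_smul 1 Real.measurable_sign.aestronglyMeasurable
      (ae_of_all _ fun x => (Real.norm_eq_abs _).trans_le (Real.abs_sign_le_one x))
  rw [← intervalIntegral.integral_Iic_add_Ioi hint.integrableOn hint.integrableOn, hleft, hright]
  module

end RealLine

section SegmentPrimitive

variable {E : Type*} [NormedAddCommGroup E] [NormedSpace ℂ E] [CompleteSpace E]
  {f : ℂ → E}

theorem hasDerivAt_intervalIntegral_comp_mul (hf : Differentiable ℂ f) (z₀ : ℂ) :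
    HasDerivAt (fun z => ∫ t in (0 : ℝ)..1, f (t * z))
      (∫ t in (0 : ℝ)..1, (t : ℂ) • deriv f (t * z₀)) z₀ := by
  have hfc : Continuous f := hf.continuous
  have hf' : Continuous (deriv f) := hf.deriv.continuous
  obtain ⟨C, hC⟩ := (isCompact_closedBall (0 : ℂ) (‖z₀‖ + 1)).exists_bound_of_continuousOn
    hf'.continuousOn
  have hbound : ∀ t ∈ Ι (0 : ℝ) 1, ∀ z ∈ ball z₀ 1, ‖(t : ℂ) • deriv f (t * z)‖ ≤ C := by
    intro t ht z hz
    rw [uIoc_of_le zero_le_one] at ht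
    have ht' : ‖(t : ℂ)‖ ≤ 1 := by rw [norm_real, Real.norm_of_nonneg ht.1.le]; exact ht.2
    have htz : (t : ℂ) * z ∈ closedBall 0 (‖z₀‖ + 1) := by
      rw [mem_closedBall_zero_iff, norm_mul]
      nlinarith [norm_nonneg (t : ℂ), norm_nonneg z, norm_lt_of_mem_ball hz]
    rw [norm_smul]
    nlinarith [hC _ htz, norm_nonneg (deriv f (t * z)), norm_nonneg (t : ℂ)]
  refine (intervalIntegral.hasDerivAt_integral_of_dominated_loc_of_deriv_le (bound := fun _ => C)
    (ball_mem_nhds z₀ one_pos) (Eventually.of_forall fun z => ?_) ?_ ?_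
    (ae_of_all _ hbound) intervalIntegrable_const
    (ae_of_all _ fun t _ z _ => ?_)).2
  · exact (by fun_prop : Continuous _).aestronglyMeasurable
  · exact (by fun_prop : Continuous _).intervalIntegrable _ _
  · exact (by fun_prop : Continuous _).aestronglyMeasurable
  · exact (hf (t * z)).hasDerivAt.scomp z (hasDerivAt_const_mul (t : ℂ))

theorem hasDerivAt_smul_intervalIntegral_comp_mul (hf : Differentiable ℂ f) (z₀ : ℂ) :
    HasDerivAt (fun z => z • ∫ t in (0 : ℝ)..1, f (t * z)) (f z₀) z₀ := by
  have hfc : Continuous f := hf.continuous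
  have hf' : Continuous (deriv f) := hf.deriv.continuous
  have hftc : ∀ t : ℝ, HasDerivAt (fun t : ℝ => (t : ℂ) • f (t * z₀))
      (z₀ • ((t : ℂ) • deriv f (t * z₀)) + f (t * z₀)) t := by
    intro t
    have h := (hasDerivAt_id (t : ℂ)).smul
      ((hf (t * z₀)).hasDerivAt.scomp (t : ℂ) (hasDerivAt_mul_const z₀))
    exact (h.scomp t ofRealCLM.hasDerivAt).congr_deriv (by simp [smul_comm t z₀])
  refine ((hasDerivAt_id z₀).smul (hasDerivAt_intervalIntegral_comp_mul hf z₀)).congr_deriv ?_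
  rw [id_eq, one_smul, ← intervalIntegral.integral_smul, ← intervalIntegral.integral_add,
    intervalIntegral.integral_eq_sub_of_hasDerivAt (fun t _ => hftc t)]
  · simp
  all_goals exact Continuous.intervalIntegrable (by fun_prop) _ _

end SegmentPrimitive

section ShiftedGaussian

theorem integrable_exp_neg_sq : Integrable fun x : ℝ => Real.exp (-x ^ 2) := by
  simpa using integrable_exp_neg_mul_sq one_pos

theorem integrable_abs_add_const_mul_exp_neg_sq (c : ℝ) :
    Integrable fun x : ℝ => (|x| + c) * Real.exp (-x ^ 2) := by
  simp_rw [add_mul]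
  refine Integrable.add ?_ (integrable_exp_neg_sq.const_mul c)
  simpa [abs_mul] using (integrable_mul_exp_neg_mul_sq one_pos).norm

variable {s : ℂ} {c : ℝ}

theorem norm_cexp_neg_two_mul_sub_sq_le (hs : ‖s‖ ≤ c) (x : ℝ) :
    ‖cexp (-2 * ((x : ℂ) - s) ^ 2)‖ ≤ Real.exp (2 * c ^ 2) * Real.exp (-x ^ 2) := by
  have hs2 : s.re ^ 2 + s.im ^ 2 ≤ c ^ 2 := by
    have h := Complex.sq_norm s
    rw [normSq_apply] at h
    nlinarith [norm_nonneg s]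
  have hre : (-2 * ((x : ℂ) - s) ^ 2).re = -2 * ((x - s.re) ^ 2 - s.im ^ 2) := by
    simp [sq]
  rw [norm_exp, hre, ← Real.exp_add, Real.exp_le_exp]
  nlinarith [sq_nonneg (x - 2 * s.re)]

theorem norm_sub_mul_cexp_neg_two_mul_sub_sq_le (hs : ‖s‖ ≤ c) (x : ℝ) :
    ‖((x : ℂ) - s) * cexp (-2 * ((x : ℂ) - s) ^ 2)‖
      ≤ Real.exp (2 * c ^ 2) * ((|x| + c) * Real.exp (-x ^ 2)) := by
  have hx : ‖(x : ℂ) - s‖ ≤ |x| + c := (norm_sub_le _ _).trans (by simpa using hs)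
  rw [norm_mul, mul_left_comm]
  exact mul_le_mul hx (norm_cexp_neg_two_mul_sub_sq_le hs x) (norm_nonneg _)
    ((norm_nonneg _).trans hx)

variable (s)

theorem integrable_cexp_neg_two_mul_sub_sq :
    Integrable fun x : ℝ => cexp (-2 * ((x : ℂ) - s) ^ 2) :=
  (integrable_exp_neg_sq.const_mul _).mono' (by fun_prop)
    (ae_of_all _ (norm_cexp_neg_two_mul_sub_sq_le le_rfl))

theorem integrable_sub_mul_cexp_neg_two_mul_sub_sq :
    Integrable fun x : ℝ => ((x : ℂ) - s) * cexp (-2 * ((x : ℂ) - s) ^ 2) :=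
  ((integrable_abs_add_const_mul_exp_neg_sq _).const_mul _).mono' (by fun_prop)
    (ae_of_all _ (norm_sub_mul_cexp_neg_two_mul_sub_sq_le le_rfl))

theorem hasDerivAt_cexp_neg_two_mul_sub_sq (x : ℝ) :
    HasDerivAt (fun x : ℝ => cexp (-2 * ((x : ℂ) - s) ^ 2))
      (-4 * (((x : ℂ) - s) * cexp (-2 * ((x : ℂ) - s) ^ 2))) x := by
  have h := ((((hasDerivAt_id (x : ℂ)).sub_const s).pow 2).const_mul (-2 : ℂ)).cexp
  exact h.comp_ofReal.congr_deriv (by simp; ring)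

theorem integral_sign_mul_sub_mul_cexp_neg_two_mul_sub_sq :
    ∫ x : ℝ, (Real.sign x : ℂ) * (((x : ℂ) - s) * cexp (-2 * ((x : ℂ) - s) ^ 2))
      = cexp (-2 * s ^ 2) / 2 := by
  have h := integral_sign_smul_of_hasDerivAt (hasDerivAt_cexp_neg_two_mul_sub_sq s)
    (integrable_cexp_neg_two_mul_sub_sq s)
    ((integrable_sub_mul_cexp_neg_two_mul_sub_sq s).const_mul (-4))
  simp only [Complex.real_smul, mul_left_comm _ (-4 : ℂ), integral_const_mul] at h
  push_cast [zero_sub, neg_sq] at h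
  linear_combination h / -4

end ShiftedGaussian

section HilbertSymbol

noncomputable def hilbertSymbolIntegrand (z : ℂ) (x : ℝ) : ℂ :=
  (-I * (Real.sign x : ℂ)) * cexp (-2 * ((x : ℂ) - I / 2 * z) ^ 2)

noncomputable def hilbertSymbolIntegral (z : ℂ) : ℂ :=
  ∫ x : ℝ, hilbertSymbolIntegrand z x

theorem hilbertSymbolIntegral_zero : hilbertSymbolIntegral 0 = 0 :=
  integral_eq_zero_of_odd fun x => by simp [hilbertSymbolIntegrand, Real.sign_neg]

theorem hasDerivAt_hilbertSymbolIntegrand (x : ℝ) (z : ℂ) :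
    HasDerivAt (hilbertSymbolIntegrand · x) (2 * ((Real.sign x : ℂ) *
      (((x : ℂ) - I / 2 * z) * cexp (-2 * ((x : ℂ) - I / 2 * z) ^ 2)))) z := by
  have h := (((((hasDerivAt_id z).const_mul (I / 2)).const_sub (x : ℂ)).pow 2).const_mul
    (-2 : ℂ)).cexp.const_mul (-I * (Real.sign x : ℂ))
  refine h.congr_deriv ?_
  simp only [id_eq, Pi.pow_apply]
  linear_combination (-2 * (Real.sign x : ℂ) * ((x : ℂ) - I / 2 * z)
    * cexp (-2 * ((x : ℂ) - I / 2 * z) ^ 2)) * I_sq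

theorem hasDerivAt_hilbertSymbolIntegral (z₀ : ℂ) :
    HasDerivAt hilbertSymbolIntegral (cexp (z₀ ^ 2 / 2)) z₀ := by
  set R := ‖z₀‖ + 1
  have hbound : ∀ x : ℝ, ∀ z ∈ ball z₀ 1, ‖2 * ((Real.sign x : ℂ) *
      (((x : ℂ) - I / 2 * z) * cexp (-2 * ((x : ℂ) - I / 2 * z) ^ 2)))‖
        ≤ 2 * (Real.exp (2 * R ^ 2) * ((|x| + R) * Real.exp (-x ^ 2))) := by
    intro x z hz
    have hs : ‖I / 2 * z‖ ≤ R := by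
      have := (norm_lt_of_mem_ball hz).le
      simp only [norm_mul, norm_div, norm_I, RCLike.norm_ofNat]
      linarith [norm_nonneg z]
    rw [norm_mul, norm_mul, norm_real, Real.norm_eq_abs, RCLike.norm_ofNat]
    refine mul_le_mul_of_nonneg_left ?_ two_pos.le
    calc |Real.sign x| * _ ≤ 1 * _ := by gcongr; exact Real.abs_sign_le_one x
      _ ≤ _ := (one_mul _).trans_le (norm_sub_mul_cexp_neg_two_mul_sub_sq_le hs x)
  have hmeas : ∀ z, Measurable (hilbertSymbolIntegrand z) := by
    unfold hilbertSymbolIntegrand; fun_prop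
  have hint : Integrable (hilbertSymbolIntegrand z₀) :=
    (integrable_cexp_neg_two_mul_sub_sq _).bdd_mul (c := 1) (by fun_prop)
      (ae_of_all _ fun x => by simpa using Real.abs_sign_le_one x)
  have h := (hasDerivAt_integral_of_dominated_loc_of_deriv_le (ball_mem_nhds z₀ one_pos)
    (Eventually.of_forall fun z => (hmeas z).aestronglyMeasurable) hint
    (by fun_prop : Measurable _).aestronglyMeasurable (ae_of_all _ hbound)
    (((integrable_abs_add_const_mul_exp_neg_sq R).const_mul _).const_mul 2)
    (ae_of_all _ fun x z _ => hasDerivAt_hilbertSymbolIntegrand x z)).2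
  rwa [integral_const_mul, integral_sign_mul_sub_mul_cexp_neg_two_mul_sub_sq,
    mul_div_cancel₀ _ two_ne_zero,
    show -2 * (I / 2 * z₀) ^ 2 = z₀ ^ 2 / 2 by linear_combination (-z₀ ^ 2 / 2) * I_sq] at h

end HilbertSymbol

/-- the symbol of the Hilbert transform:
`φ(z) = √(2/π) ∫ (-i sgn x) e^{-2(x-(i/2)z)²} dx` satisfies `φ'(z) = √(2/π) e^{z²/2}`,
`φ(0) = 0`, and hence `φ(z) = (2/√π) A(z/√2)` where `A(z) = ∫₀^z e^{u²} du`. -/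
theorem hilbert_symbol (φ A : ℂ → ℂ)
    (hφ : ∀ z : ℂ, φ z = ((Real.sqrt (2 / Real.pi) : ℝ) : ℂ) *
      ∫ x : ℝ, (-Complex.I * (Real.sign x : ℂ))
        * Complex.exp (-2 * ((x : ℂ) - Complex.I / 2 * z) ^ 2))
    (hA : ∀ z : ℂ, A z = z * ∫ t in (0:ℝ)..1, Complex.exp (((t : ℂ) * z) ^ 2)) :
    (∀ z : ℂ, HasDerivAt φ (((Real.sqrt (2 / Real.pi) : ℝ) : ℂ)
        * Complex.exp (z ^ 2 / 2)) z)
      ∧ φ 0 = 0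
      ∧ ∀ z : ℂ, φ z = (2 / ((Real.sqrt Real.pi : ℝ) : ℂ))
          * A (z / ((Real.sqrt 2 : ℝ) : ℂ)) := by
  have hφ' : φ = fun z => ((√(2 / π) : ℝ) : ℂ) * hilbertSymbolIntegral z := funext hφ
  have hφd : ∀ z, HasDerivAt φ ((√(2 / π) : ℝ) * cexp (z ^ 2 / 2)) z := fun z =>
    hφ' ▸ (hasDerivAt_hilbertSymbolIntegral z).const_mul _
  have hφ0 : φ 0 = 0 := by simp only [hφ', hilbertSymbolIntegral_zero, mul_zero]
  refine ⟨hφd, hφ0, congrFun (eq_of_hasDerivAt_eq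
    (g := fun z => 2 / ((√π : ℝ) : ℂ) * A (z / (√2 : ℝ))) hφd (fun z => ?_) 0 ?_)⟩
  · have hAd : ∀ w, HasDerivAt A (cexp (w ^ 2)) w := fun w =>
      funext hA ▸ hasDerivAt_smul_intervalIntegral_comp_mul (f := fun u => cexp (u ^ 2))
        (by fun_prop) w
    refine (((hAd _).comp z ((hasDerivAt_id z).div_const _)).const_mul _).congr_deriv ?_
    have h2 : ((√2 : ℝ) : ℂ) ^ 2 = 2 := by norm_cast; simp
    rw [Real.sqrt_div' 2 Real.pi_pos.le, div_pow, h2, id_eq]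
    push_cast
    field_simp
    linear_combination -h2
  · simp [hφ0, hA]
end
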